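/- On the ℂ-vector space M = ℂ[x,y] × ℂ[x,y], define a bilinear product ⋆ by (f, u) ⋆ (g, v) = (f·g, f·v + g·u + (1/2)·(∂f/∂x · ∂g/∂y − ∂f/∂y · ∂g/∂x)). Then ⋆ is associative, and M with componentwise addition, the product ⋆, and unit (1, 0) is an associative unital ℂ-algebra. -/

import Mathlib

/-! The product is a square-zero extension of `A = ℂ[x,y]` by itself, twisted by the 2-cochain
`B = ½ {·,·}` built from the Poisson bivector `∂ₓ ∧ ∂_y`. Expanding both bracketings, associativity
is exactly the Hochschild cocycle identity `h B(f,g) + B(fg,h) = f B(g,h) + B(f,gh)`, which holds for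
any biderivation of a commutative algebra by the Leibniz rule in each slot; a biderivation also
vanishes on `1`, so `(1, 0)` is a unit. -/

noncomputable section

/-- M = ℂ[x,y] × ℂ[x,y], the even part ℂ[x,y] ⊕ Ω²(ℂ[x,y]) of the de Rham complex,
identifying w·dx∧dy with w. -/
abbrev Meven : Type := MvPolynomial (Fin 2) ℂ × MvPolynomial (Fin 2) ℂ

/-- The Feigin–Shoikhet star product:
(f, u) ⋆ (g, v) = (f·g, f·v + g·u + ½(∂f/∂x·∂g/∂y − ∂f/∂y·∂g/∂x)). -/
def star2 (α β : Meven) : Meven :=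
  (α.1 * β.1,
    α.1 * β.2 + β.1 * α.2 +
      ((1 : ℂ) / 2) • (MvPolynomial.pderiv (0 : Fin 2) α.1 * MvPolynomial.pderiv (1 : Fin 2) β.1
        - MvPolynomial.pderiv (1 : Fin 2) α.1 * MvPolynomial.pderiv (0 : Fin 2) β.1))

section Biderivation

variable {R A : Type*} [CommRing R] [CommRing A] [Algebra R A]

structure LinearMap.IsBiderivation (B : A →ₗ[R] A →ₗ[R] A) : Prop where
  map_mul_left : ∀ f g h, B (f * g) h = f * B g h + g * B f h
  map_mul_right : ∀ f g h, B f (g * h) = g * B f h + h * B f g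

namespace LinearMap.IsBiderivation

variable {B : A →ₗ[R] A →ₗ[R] A} (hB : B.IsBiderivation)
include hB

theorem smul (r : R) : (r • B).IsBiderivation where
  map_mul_left f g h := by
    simp only [smul_apply, hB.map_mul_left, smul_add, mul_smul_comm]
  map_mul_right f g h := by
    simp only [smul_apply, hB.map_mul_right, smul_add, mul_smul_comm]

theorem map_one_left (g : A) : B 1 g = 0 := by
  simpa using hB.map_mul_left 1 1 g

theorem map_one_right (f : A) : B f 1 = 0 := by
  simpa using hB.map_mul_right f 1 1

theorem cocycle (f g h : A) : h * B f g + B (f * g) h = f * B g h + B f (g * h) := by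
  rw [hB.map_mul_left, hB.map_mul_right]
  ring

end LinearMap.IsBiderivation

def Derivation.wedge (D₁ D₂ : Derivation R A A) : A →ₗ[R] A →ₗ[R] A :=
  (LinearMap.mul R A).compl₁₂ D₁.toLinearMap D₂.toLinearMap -
    (LinearMap.mul R A).compl₁₂ D₂.toLinearMap D₁.toLinearMap

theorem Derivation.wedge_apply (D₁ D₂ : Derivation R A A) (f g : A) :
    D₁.wedge D₂ f g = D₁ f * D₂ g - D₂ f * D₁ g :=
  rfl

theorem Derivation.isBiderivation_wedge (D₁ D₂ : Derivation R A A) :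
    (D₁.wedge D₂).IsBiderivation where
  map_mul_left f g h := by
    simp only [wedge_apply, leibniz, smul_eq_mul]
    ring
  map_mul_right f g h := by
    simp only [wedge_apply, leibniz, smul_eq_mul]
    ring

end Biderivation

namespace TwistedSqZero

variable {R A : Type*} [CommRing R] [CommRing A] [Algebra R A]

def mul (B : A →ₗ[R] A →ₗ[R] A) (α β : A × A) : A × A :=
  (α.1 * β.1, α.1 * β.2 + β.1 * α.2 + B α.1 β.1)

variable (B : A →ₗ[R] A →ₗ[R] A)

theorem mul_assoc_of_cocycle
    (hB : ∀ f g h, h * B f g + B (f * g) h = f * B g h + B f (g * h)) (α β γ : A × A) :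
    mul B (mul B α β) γ = mul B α (mul B β γ) := by
  obtain ⟨f, u⟩ := α
  obtain ⟨g, v⟩ := β
  obtain ⟨h, w⟩ := γ
  simp only [mul, Prod.mk.injEq]
  exact ⟨mul_assoc f g h, by linear_combination hB f g h⟩

theorem mul_add (α β γ : A × A) : mul B α (β + γ) = mul B α β + mul B α γ := by
  simp only [mul, Prod.fst_add, Prod.snd_add, map_add, Prod.mk_add_mk, Prod.mk.injEq]
  constructor <;> ring

theorem add_mul (α β γ : A × A) : mul B (α + β) γ = mul B α γ + mul B β γ := by
  simp only [mul, Prod.fst_add, Prod.snd_add, map_add, LinearMap.add_apply, Prod.mk_add_mk,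
    Prod.mk.injEq]
  constructor <;> ring

theorem smul_mul (r : R) (α β : A × A) : mul B (r • α) β = r • mul B α β := by
  simp only [mul, Prod.smul_fst, Prod.smul_snd, map_smul, LinearMap.smul_apply, Prod.smul_mk,
    smul_mul_assoc, mul_smul_comm, smul_add]

theorem mul_smul (r : R) (α β : A × A) : mul B α (r • β) = r • mul B α β := by
  simp only [mul, Prod.smul_fst, Prod.smul_snd, map_smul, Prod.smul_mk,
    smul_mul_assoc, mul_smul_comm, smul_add]

variable {B}

theorem one_mul (hB : B.IsBiderivation) (α : A × A) : mul B (1, 0) α = α := by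
  simp [mul, hB.map_one_left]

theorem mul_one (hB : B.IsBiderivation) (α : A × A) : mul B α (1, 0) = α := by
  simp [mul, hB.map_one_right]

end TwistedSqZero

open MvPolynomial in
theorem star2_eq_twistedSqZero_mul :
    star2 = TwistedSqZero.mul (((1 : ℂ) / 2) • (pderiv (0 : Fin 2)).wedge (pderiv 1)) :=
  rfl

/-- the product ⋆ on M = ℂ[x,y] × ℂ[x,y] is associative, and M with
componentwise addition, product ⋆ and unit (1,0) is an associative unital ℂ-algebra:
⋆ is associative, distributes over addition on both sides, is ℂ-bilinear, and (1,0)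
is a two-sided unit. -/
theorem stmt6 :
    (∀ α β γ : Meven, star2 (star2 α β) γ = star2 α (star2 β γ)) ∧
    (∀ α β γ : Meven, star2 α (β + γ) = star2 α β + star2 α γ) ∧
    (∀ α β γ : Meven, star2 (α + β) γ = star2 α γ + star2 β γ) ∧
    (∀ (c : ℂ) (α β : Meven), star2 (c • α) β = c • star2 α β) ∧
    (∀ (c : ℂ) (α β : Meven), star2 α (c • β) = c • star2 α β) ∧
    (∀ α : Meven, star2 (1, 0) α = α) ∧
    (∀ α : Meven, star2 α (1, 0) = α) := by
  have hB := (Derivation.isBiderivation_wedge (MvPolynomial.pderiv (0 : Fin 2))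
    (MvPolynomial.pderiv 1)).smul ((1 : ℂ) / 2)
  rw [star2_eq_twistedSqZero_mul]
  open TwistedSqZero in
  exact ⟨mul_assoc_of_cocycle _ hB.cocycle, mul_add _, add_mul _, smul_mul _, mul_smul _,
    one_mul hB, mul_one hB⟩
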